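/- arXiv:1312.6213 — 6 statements merged into one kernel-verified Lean document; each statement's English description precedes it below -/
import Mathlib

section
/- Dependent random choice for second neighborhoods: Let G = (A ∪ B, E) be a C4-free bipartite graph on n vertices with c·n^{3/2} edges and |A| = |B| = n/2, where n > 1/c^{20}. If positive integers a, m, r, t satisfy c^{2t} n − binom(n, r)·(m/(n/2))^t ≥ a, then there exists U ⊆ A with |U| ≥ a such that every r-element subset S ⊆ U has |N_2(S)| ≥ m, where N_2(S) is the set of vertices at distance exactly 2 from every vertex of S. -/
/-! Since `G` is `C₄`-free, two vertices of `A` have at most one common neighbour, so counting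
paths `x - b - w` with `b ∈ B` gives `∑_{u ∈ A} |N₂(u) ∩ A| ≥ ∑_b d(b) (d(b) - 1) ≥ c² n²` by
Cauchy–Schwarz. By convexity, a random `t`-tuple `T` of vertices of `A` has on average at least
`c^{2t} n` common second neighbours `X T` in `A`, while an `r`-set with fewer than `m` common second
neighbours lies in `X T` with probability below `(m / (n / 2))^t`. A tuple `T` beating the average
leaves, after deleting one vertex of each such bad `r`-set from `X T`, the required set `U`. -/

open Finset
open scoped Classical

/-- A graph is `C₄`-free: there is no 4-cycle, equivalently any closed walk
`a b c d a` of length 4 is degenerate. -/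
def C4Free {V : Type*} (G : SimpleGraph V) : Prop :=
  ∀ a b c d : V, G.Adj a b → G.Adj b c → G.Adj c d → G.Adj d a → a = c ∨ b = d

/-- The second common neighborhood of a set `S`: vertices at distance exactly 2
from every vertex of `S`. -/
noncomputable def secondNbhd {V : Type*} [Fintype V] (G : SimpleGraph V) (S : Finset V) :
    Finset V :=
  Finset.univ.filter (fun w => ∀ s ∈ S, G.dist s w = 2)

namespace Finset

variable {α β : Type*}

theorem card_filter_piFinset_forall (A : Finset α) (P : α → Prop) [DecidablePred P] (n : ℕ) :
    #{T ∈ Fintype.piFinset fun _ : Fin n ↦ A | ∀ i, P (T i)} = #{w ∈ A | P w} ^ n := by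
  have h : {T ∈ Fintype.piFinset fun _ : Fin n ↦ A | ∀ i, P (T i)}
      = Fintype.piFinset fun _ : Fin n ↦ {w ∈ A | P w} := by
    ext T
    simp only [mem_filter, Fintype.mem_piFinset, forall_and]
  rw [h, Fintype.card_piFinset_const]

theorem sum_piFinset_card_filter_forall (R : α → β → Prop) [DecidableRel R] (A : Finset α)
    (Y : Finset β) (n : ℕ) :
    ∑ T ∈ Fintype.piFinset (fun _ : Fin n ↦ A), #{u ∈ Y | ∀ i, R (T i) u}
      = ∑ u ∈ Y, #{w ∈ A | R w u} ^ n := by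
  simp_rw [card_filter, sum_comm (s := Fintype.piFinset _), ← card_filter]
  exact sum_congr rfl fun u _ ↦ card_filter_piFinset_forall A (R · u) n

theorem exists_subset_card_le_add_forall_not_subset [DecidableEq α] (X : Finset α)
    (F : Finset (Finset α)) (hF : ∀ S ∈ F, S.Nonempty) :
    ∃ U ⊆ X, #X ≤ #U + #F ∧ ∀ S ∈ F, ¬S ⊆ U := by
  induction F using Finset.induction_on with
  | empty => exact ⟨X, subset_rfl, by simp, by simp⟩
  | insert S F hSF ih =>
    obtain ⟨U, hUX, hcard, hU⟩ := ih fun S' hS' ↦ hF S' (mem_insert_of_mem hS')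
    obtain ⟨x, hx⟩ := hF S (mem_insert_self S F)
    refine ⟨U.erase x, (erase_subset x U).trans hUX, ?_, ?_⟩
    · have := pred_card_le_card_erase (s := U) (a := x)
      rw [card_insert_of_notMem hSF]
      omega
    · rintro S' hS' hS'U
      rcases mem_insert.1 hS' with rfl | hS'
      · exact notMem_erase x U (hS'U hx)
      · exact hU S' hS' (hS'U.trans (erase_subset x U))

end Finset

theorem exists_subset_forall_le_card_commonNbhd {α β : Type*} (R : α → β → Prop) [DecidableRel R]
    (A : Finset α) (Y : Finset β) (hA : A.Nonempty) {a m r t : ℕ} (hr : 0 < r)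
    (h : a * #A ^ t + (#Y).choose r * m ^ t ≤ ∑ u ∈ Y, #{w ∈ A | R w u} ^ t) :
    ∃ U ⊆ Y, a ≤ #U ∧ ∀ S ⊆ U, #S = r → m ≤ #{w ∈ A | ∀ v ∈ S, R w v} := by
  set X : (Fin t → α) → Finset β := fun T ↦ {u ∈ Y | ∀ i, R (T i) u}
  set bad := {S ∈ Y.powersetCard r | #{w ∈ A | ∀ v ∈ S, R w v} < m}
  have hX : ∑ T ∈ Fintype.piFinset fun _ : Fin t ↦ A, #(X T)
      = ∑ u ∈ Y, #{w ∈ A | R w u} ^ t :=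
    sum_piFinset_card_filter_forall R A Y t
  have hbad_tuples (S) (hS : S ∈ bad) :
      #{T ∈ Fintype.piFinset fun _ : Fin t ↦ A | S ⊆ X T} ≤ m ^ t := by
    obtain ⟨hSY, -⟩ := mem_powersetCard.1 (mem_filter.1 hS).1
    have hfilter : {T ∈ Fintype.piFinset fun _ : Fin t ↦ A | S ⊆ X T}
        = {T ∈ Fintype.piFinset fun _ : Fin t ↦ A | ∀ i, ∀ v ∈ S, R (T i) v} := by
      refine filter_congr fun T _ ↦ ?_
      simp only [X, subset_iff, mem_filter]
      exact ⟨fun h i v hv ↦ (h hv).2 i, fun h v hv ↦ ⟨hSY hv, fun i ↦ h i v hv⟩⟩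
    rw [hfilter, card_filter_piFinset_forall A fun w ↦ ∀ v ∈ S, R w v]
    exact Nat.pow_le_pow_left (mem_filter.1 hS).2.le t
  have hbad : ∑ T ∈ Fintype.piFinset fun _ : Fin t ↦ A, #{S ∈ bad | S ⊆ X T}
      ≤ (#Y).choose r * m ^ t :=
    calc ∑ T ∈ Fintype.piFinset fun _ : Fin t ↦ A, #{S ∈ bad | S ⊆ X T}
        = ∑ S ∈ bad, #{T ∈ Fintype.piFinset fun _ : Fin t ↦ A | S ⊆ X T} := by
          simp_rw [card_filter]; exact sum_comm
      _ ≤ #bad * m ^ t := (sum_le_card_nsmul _ _ _ hbad_tuples).trans_eq (smul_eq_mul _ _)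
      _ ≤ (#Y).choose r * m ^ t := by
          gcongr
          exact (card_filter_le _ _).trans (card_powersetCard r Y).le
  obtain ⟨T, -, hT⟩ :
      ∃ T ∈ Fintype.piFinset fun _ : Fin t ↦ A, a + #{S ∈ bad | S ⊆ X T} ≤ #(X T) := by
    refine exists_le_of_sum_le hA.piFinset_const ?_
    rw [sum_add_distrib, sum_const, smul_eq_mul, hX, Fintype.card_piFinset_const]
    linarith
  obtain ⟨U, hUX, hUcard, hU⟩ := exists_subset_card_le_add_forall_not_subset (X T)
    {S ∈ bad | S ⊆ X T} fun S hS ↦ card_pos.1 <|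
      (mem_powersetCard.1 (mem_filter.1 (mem_filter.1 hS).1).1).2 ▸ hr
  refine ⟨U, hUX.trans (filter_subset _ _), by omega, fun S hSU hS ↦ ?_⟩
  by_contra! hlt
  have hSY : S ⊆ Y := hSU.trans (hUX.trans (filter_subset _ _))
  exact hU S (mem_filter.2 ⟨mem_filter.2 ⟨mem_powersetCard.2 ⟨hSY, hS⟩, hlt⟩, hSU.trans hUX⟩) hSU

namespace SimpleGraph

variable {V : Type*} {G : SimpleGraph V}

theorem dist_eq_two_of_adj_of_adj {u v w : V} (hu : G.Adj u w) (hv : G.Adj w v) (hne : u ≠ v)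
    (hnadj : ¬G.Adj u v) : G.dist u v = 2 := by
  have h : G.edist u v = 2 := edist_eq_two_iff.2 ⟨hne, hnadj, w, hu, hv.symm⟩
  exact_mod_cast (hu.reachable.trans hv.reachable).coe_dist_eq_edist.trans h

theorem IsBipartiteWith.not_adj_of_mem {s t : Set V} (h : G.IsBipartiteWith s t) {u v : V}
    (hu : u ∈ s) (hv : v ∈ s) : ¬G.Adj u v := fun hadj ↦
  Set.disjoint_left.1 h.disjoint hv (h.mem_of_mem_adj hu hadj)

end SimpleGraph

open SimpleGraph

namespace C4Free

variable {V : Type*} [Fintype V] {G : SimpleGraph V} [DecidableRel G.Adj] {A B : Finset V}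

theorem sum_card_offDiag_neighborFinset_le (hG : C4Free G) (hAB : G.IsBipartiteWith A B) :
    ∑ b ∈ B, #(G.neighborFinset b).offDiag ≤ ∑ u ∈ A, #{v ∈ A | G.dist u v = 2} := by
  rw [← card_sigma, ← card_sigma]
  refine card_le_card_of_injOn (fun p ↦ ⟨p.2.1, p.2.2⟩) ?_ ?_
  · rintro ⟨b, x, w⟩ hp
    simp only [coe_sigma, Set.mem_sigma_iff, mem_coe, mem_offDiag, mem_neighborFinset] at hp
    obtain ⟨hb, hx, hw, hxw⟩ := hp
    have hxA : x ∈ A := hAB.mem_of_mem_adj' hb hx.symm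
    have hwA : w ∈ A := hAB.mem_of_mem_adj' hb hw.symm
    simp only [coe_sigma, Set.mem_sigma_iff, mem_coe, coe_filter, Set.mem_ofPred_eq]
    exact ⟨hxA, hwA, dist_eq_two_of_adj_of_adj hx.symm hw hxw (hAB.not_adj_of_mem hxA hwA)⟩
  · rintro ⟨b₁, x, w⟩ h₁ ⟨b₂, x', w'⟩ h₂ heq
    simp only [coe_sigma, Set.mem_sigma_iff, mem_coe, mem_offDiag, mem_neighborFinset] at h₁ h₂
    obtain ⟨rfl, rfl⟩ : x = x' ∧ w = w' := by simpa using heq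
    -- otherwise `x b₁ w b₂` is a 4-cycle
    obtain h | rfl := hG x b₁ w b₂ h₁.2.1.symm h₁.2.2.1 h₂.2.2.1.symm h₂.2.1
    · exact absurd h h₁.2.2.2
    · rfl

theorem sum_degree_sq_le (hG : C4Free G) (hAB : G.IsBipartiteWith A B) :
    ∑ b ∈ B, G.degree b ^ 2 ≤ ∑ u ∈ A, #{v ∈ A | G.dist u v = 2} + #G.edgeFinset := by
  have hsq : ∀ b, G.degree b ^ 2 = #(G.neighborFinset b).offDiag + G.degree b := fun b ↦ by
    rw [offDiag_card, card_neighborFinset_eq_degree, sq, Nat.sub_add_cancel (Nat.le_mul_self _)]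
  rw [sum_congr rfl fun b _ ↦ hsq b, sum_add_distrib,
    isBipartiteWith_sum_degrees_eq_card_edges' hAB]
  exact Nat.add_le_add_right (sum_card_offDiag_neighborFinset_le hG hAB) _

theorem mul_sq_le_sum_card_dist_eq_two (hG : C4Free G) (hAB : G.IsBipartiteWith A B)
    {c N : ℝ} (hN : 0 < N) (hB : (#B : ℝ) = N / 2)
    (he : (#G.edgeFinset : ℝ) = c * N ^ ((3 : ℝ) / 2)) (hcN : 1 ≤ c * √N) :
    c ^ 2 * N ^ 2 ≤ ∑ u ∈ A, (#{v ∈ A | G.dist u v = 2} : ℝ) := by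
  replace he : (#G.edgeFinset : ℝ) = c * N * √N := by
    rw [he, show (3 : ℝ) / 2 = 1 + 1 / 2 by norm_num, Real.rpow_add hN, Real.rpow_one,
      Real.sqrt_eq_rpow, mul_assoc]
  have hdeg : ∑ b ∈ B, (G.degree b : ℝ) = c * N * √N := by
    rw [← he, ← isBipartiteWith_sum_degrees_eq_card_edges' hAB, Nat.cast_sum]
  have hsq : ∑ b ∈ B, (G.degree b : ℝ) ^ 2
      ≤ ∑ u ∈ A, (#{v ∈ A | G.dist u v = 2} : ℝ) + c * N * √N := by
    rw [← he]
    exact_mod_cast sum_degree_sq_le hG hAB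
  have hCS := sq_sum_le_card_mul_sum_sq (s := B) (f := fun b ↦ (G.degree b : ℝ))
  rw [hdeg, hB] at hCS
  have hsqrt : √N ^ 2 = N := Real.sq_sqrt hN.le
  have hlin : c * N * √N ≤ c ^ 2 * N ^ 2 := by
    have hc : 0 ≤ c * N * √N := by nlinarith [Real.sqrt_nonneg N]
    nlinarith [mul_nonneg hc (sub_nonneg.2 hcN)]
  -- `hCS` and `hsq` give `2 c² N² ≤ ∑ u ∈ A, … + c N √N`, and `hlin` absorbs the last term
  nlinarith

end C4Free

theorem one_lt_mul_sqrt_of_one_div_pow_lt {c N : ℝ} {k : ℕ} (hc : 0 < c) (hN : 1 ≤ N)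
    (hk : k ≠ 0) (h : 1 / c ^ (2 * k) < N) : 1 < c * √N := by
  have h₁ : 1 < c ^ (2 * k) * N := by rwa [div_lt_iff₀ (by positivity), mul_comm] at h
  have h₂ : (c * √N) ^ (2 * k) = c ^ (2 * k) * N ^ k := by
    rw [mul_pow, pow_mul (√N), Real.sq_sqrt (by linarith)]
  have h₃ : c ^ (2 * k) * N ≤ c ^ (2 * k) * N ^ k :=
    mul_le_mul_of_nonneg_left (le_self_pow₀ hN hk) (by positivity)
  exact (one_lt_pow_iff_of_nonneg (n := 2 * k) (by positivity) (by omega)).1 (by linarith)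

theorem le_sum_pow_of_mul_sq_le_sum {ι : Type*} {s : Finset ι} {f : ι → ℝ} {c N : ℝ}
    (hf : ∀ i ∈ s, 0 ≤ f i) (hN : 0 < N) (hs : (#s : ℝ) = N / 2)
    (hsum : c ^ 2 * N ^ 2 ≤ ∑ i ∈ s, f i) {t : ℕ} (ht : 0 < t) :
    c ^ (2 * t) * N * (N / 2) ^ t ≤ ∑ i ∈ s, f i ^ t := by
  obtain ⟨k, rfl⟩ : ∃ k, t = k + 1 := ⟨t - 1, by omega⟩
  have hJensen := pow_sum_le_card_mul_sum_pow hf k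
  rw [hs] at hJensen
  refine le_of_mul_le_mul_left ?_ (pow_pos (half_pos hN) k)
  calc (N / 2) ^ k * (c ^ (2 * (k + 1)) * N * (N / 2) ^ (k + 1))
      = (c ^ 2 * N ^ 2) ^ (k + 1) * (1 / 2) ^ (2 * k + 1) := by ring
    _ ≤ (c ^ 2 * N ^ 2) ^ (k + 1) :=
        mul_le_of_le_one_right (by positivity) (pow_le_one₀ (by norm_num) (by norm_num))
    _ ≤ (∑ i ∈ s, f i) ^ (k + 1) := pow_le_pow_left₀ (by positivity) hsum _
    _ ≤ (N / 2) ^ k * ∑ i ∈ s, f i ^ (k + 1) := hJensen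

theorem dependent_random_choice_second_nbhd_general {V : Type*} [Fintype V]
    (G : SimpleGraph V) [DecidableRel G.Adj] (hG : C4Free G) (A B : Finset V) (c : ℝ)
    (hc : 0 < c)
    (hdisj : Disjoint A B)
    (hbip : ∀ u w : V, G.Adj u w → (u ∈ A ∧ w ∈ B) ∨ (u ∈ B ∧ w ∈ A))
    (hA : (A.card : ℝ) = (Fintype.card V : ℝ) / 2)
    (hB : (B.card : ℝ) = (Fintype.card V : ℝ) / 2)
    (he : (G.edgeFinset.card : ℝ) = c * (Fintype.card V : ℝ) ^ ((3 : ℝ) / 2))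
    (hn : 1 / c ^ 20 < (Fintype.card V : ℝ))
    (a m r t : ℕ) (hr : 0 < r) (ht : 0 < t)
    (hineq : (a : ℝ) ≤ c ^ (2 * t) * (Fintype.card V : ℝ) -
      ((Fintype.card V).choose r : ℝ) * ((m : ℝ) / ((Fintype.card V : ℝ) / 2)) ^ t) :
    ∃ U ⊆ A, a ≤ U.card ∧
      ∀ S ⊆ U, S.card = r → m ≤ (secondNbhd G S).card := by
  set n := Fintype.card V
  have hn₀ : (0 : ℝ) < n := (by positivity : (0 : ℝ) < 1 / c ^ 20).trans hn
  have hAB : G.IsBipartiteWith A B := ⟨disjoint_coe.2 hdisj, hbip⟩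
  have hcn : 1 < c * √n := one_lt_mul_sqrt_of_one_div_pow_lt (k := 10) hc
    (by exact_mod_cast Nat.cast_pos.1 hn₀) (by norm_num) hn
  have hpow := le_sum_pow_of_mul_sq_le_sum (fun _ _ ↦ Nat.cast_nonneg _) hn₀ hA
    (hG.mul_sq_le_sum_card_dist_eq_two hAB hn₀ hB he hcn.le) ht
  have hcount : a * #A ^ t + (#A).choose r * m ^ t ≤ ∑ u ∈ A, #{v ∈ A | G.dist u v = 2} ^ t := by
    have hchoose : ((#A).choose r : ℝ) ≤ n.choose r := by
      exact_mod_cast Nat.choose_le_choose r (card_le_univ A)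
    have hm : ((m : ℝ) / (n / 2)) ^ t * (n / 2) ^ t = m ^ t := by
      rw [← mul_pow, div_mul_cancel₀ _ (by positivity)]
    rw [← Nat.cast_le (α := ℝ)]
    push_cast
    rw [hA]
    nlinarith [mul_le_mul_of_nonneg_right hineq (by positivity : (0 : ℝ) ≤ (n / 2) ^ t),
      mul_le_mul_of_nonneg_right hchoose (by positivity : (0 : ℝ) ≤ m ^ t)]
  obtain ⟨U, hUA, hUa, hU⟩ := exists_subset_forall_le_card_commonNbhd (fun w v ↦ G.dist v w = 2)
    A A (card_pos.1 (by exact_mod_cast hA ▸ half_pos hn₀)) hr hcount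
  refine ⟨U, hUA, hUa, fun S hSU hS ↦ (hU S hSU hS).trans (card_le_card fun w hw ↦ ?_)⟩
  simp only [mem_filter] at hw
  simpa only [secondNbhd, mem_filter, mem_univ, true_and] using hw.2

/-- Dependent random choice for second neighborhoods: in a `C₄`-free bipartite
graph on `n` vertices with parts of size `n/2` and `c·n^{3/2}` edges, where
`n > 1/c²⁰`, if positive integers `a, m, r, t` satisfy
`c^{2t}·n − binom(n,r)·(m/(n/2))^t ≥ a`, then there is `U ⊆ A` with `|U| ≥ a`
such that every `r`-subset `S ⊆ U` satisfies `|N₂(S)| ≥ m`. -/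
theorem dependent_random_choice_second_nbhd {V : Type*} [Fintype V] [DecidableEq V]
    (G : SimpleGraph V) [DecidableRel G.Adj] (hG : C4Free G) (A B : Finset V) (c : ℝ)
    (hc : 0 < c)
    (hdisj : Disjoint A B) (hpart : ∀ v : V, v ∈ A ∨ v ∈ B)
    (hbip : ∀ u w : V, G.Adj u w → (u ∈ A ∧ w ∈ B) ∨ (u ∈ B ∧ w ∈ A))
    (hA : (A.card : ℝ) = (Fintype.card V : ℝ) / 2)
    (hB : (B.card : ℝ) = (Fintype.card V : ℝ) / 2)
    (he : (G.edgeFinset.card : ℝ) = c * (Fintype.card V : ℝ) ^ ((3 : ℝ) / 2))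
    (hn : 1 / c ^ 20 < (Fintype.card V : ℝ))
    (a m r t : ℕ) (ha : 0 < a) (hm : 0 < m) (hr : 0 < r) (ht : 0 < t)
    (hineq : (a : ℝ) ≤ c ^ (2 * t) * (Fintype.card V : ℝ) -
      ((Fintype.card V).choose r : ℝ) * ((m : ℝ) / ((Fintype.card V : ℝ) / 2)) ^ t) :
    ∃ U ⊆ A, a ≤ U.card ∧
      ∀ S ⊆ U, S.card = r → m ≤ (secondNbhd G S).card :=
  dependent_random_choice_second_nbhd_general G hG A B c hc hdisj hbip hA hB he hn a m r t hr ht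
    hineq
end

section
/- Let G be a graph on n vertices with average degree d in which every subgraph has average degree at most d. Then there is a bipartite subgraph G' = G[A, B] with |B| = n/2, e(G') ≥ 0.36·e(G), and every vertex in B has degree (in G') less than 30·d(G'). -/
open Finset
open scoped Classical

/-!
Let `X` be the set of vertices of degree at least `10d`. By Markov's inequality `|X| ≤ n/10`,
and since `G[X]` has average degree at most `d`, at most `e(G)/10` edges lie inside `X`.
A uniformly random `n/2`-subset `B` of `V \ X` (a set of between `n/2` and `9n/10` vertices)
separates the two ends of any other edge with probability at least `2/5`, so some `B` cuts at
least `0.9 · 0.4 = 0.36` of all edges. Then `d(G[A, B]) ≥ 0.36 d`, while every vertex of `B`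
has degree below `10d < 30 · 0.36 d`.
-/

namespace Nat

theorem choose_succ_succ_le_two_mul_choose {m k : ℕ} (h : m + 1 ≤ 2 * (k + 1)) :
    (m + 1).choose (k + 1) ≤ 2 * m.choose k := by
  refine Nat.le_of_mul_le_mul_right ?_ k.succ_pos
  calc (m + 1).choose (k + 1) * (k + 1) = (m + 1) * m.choose k := (add_one_mul_choose_eq m k).symm
    _ ≤ 2 * (k + 1) * m.choose k := Nat.mul_le_mul_right _ h
    _ = 2 * m.choose k * (k + 1) := by ring

theorem choose_add_two_succ_le_five_mul_choose {m k : ℕ} (h9 : 9 * (k + 1) ≤ 5 * (m + 2))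
    (h2 : m + 2 ≤ 2 * (k + 1)) : (m + 2).choose (k + 1) ≤ 5 * m.choose k := by
  have hkm : k ≤ m := by omega
  have hid : (m + 2) * (m + 1) * m.choose k = (k + 1) * (m + 1 - k) * (m + 2).choose (k + 1) := by
    have hup : (m + 1).choose (k + 1) * (m + 2) = (m + 2).choose (k + 1) * (m + 1 - k) := by
      rw [choose_mul_succ_eq (m + 1) (k + 1), show m + 1 + 1 - (k + 1) = m + 1 - k by omega]
    calc (m + 2) * (m + 1) * m.choose k = (k + 1) * ((m + 1).choose (k + 1) * (m + 2)) := by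
          rw [mul_assoc, add_one_mul_choose_eq m k]; ring
      _ = _ := by rw [hup]; ring
  -- `M (M - 1) ≤ 5 K (M - K)` for `M = m + 2`, `K = k + 1`, as `(2K - M)(5M - 9K) ≥ 0`
  have hquad : (m + 2) * (m + 1) ≤ 5 * ((k + 1) * (m + 1 - k)) := by
    zify [hkm, show k ≤ m + 1 by omega]
    nlinarith [mul_nonneg (by omega : (0 : ℤ) ≤ 2 * (k + 1) - (m + 2))
      (by omega : (0 : ℤ) ≤ 5 * (m + 2) - 9 * (k + 1))]
  have hpos : 0 < (k + 1) * (m + 1 - k) := Nat.mul_pos k.succ_pos (by omega)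
  refine Nat.le_of_mul_le_mul_left ?_ hpos
  calc (k + 1) * (m + 1 - k) * (m + 2).choose (k + 1) = (m + 2) * (m + 1) * m.choose k := hid.symm
    _ ≤ 5 * ((k + 1) * (m + 1 - k)) * m.choose k := Nat.mul_le_mul_right _ hquad
    _ = (k + 1) * (m + 1 - k) * (5 * m.choose k) := by ring

end Nat

namespace Finset

variable {α β R : Type*}

theorem exists_mem_mul_card_le_card_bipartiteBelow [CommSemiring R] [LinearOrder R]
    [IsStrictOrderedRing R] (r : α → β → Prop) [∀ a b, Decidable (r a b)] {s : Finset α}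
    {t : Finset β} {c : R} (ht : t.Nonempty) (h : ∀ a ∈ s, c * #t ≤ #(t.bipartiteAbove r a)) :
    ∃ b ∈ t, c * #s ≤ #(s.bipartiteBelow r b) := by
  by_contra! hlt
  have := card_nsmul_lt_card_nsmul_of_le_of_lt r ht h hlt
  simp only [nsmul_eq_mul] at this
  exact this.ne (by ring)

variable [DecidableEq α]

theorem card_powersetCard_erase_erase_le {Y : Finset α} {a b : α} (ha : a ∈ Y) (hba : b ≠ a)
    (k : ℕ) :
    #(((Y.erase a).erase b).powersetCard k) ≤
      #{B ∈ Y.powersetCard (k + 1) | a ∈ B ∧ b ∉ B} := by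
  have haS {S : Finset α} (hS : S ⊆ (Y.erase a).erase b) : a ∉ S := fun h => by
    simpa using hS h
  refine card_le_card_of_injOn (insert a) (fun S hS => ?_)
    (insert_erase_invOn.2.injOn.mono fun S hS => haS (mem_powersetCard.1 hS).1)
  obtain ⟨hSY, rfl⟩ := mem_powersetCard.1 hS
  simp only [coe_filter, Set.mem_ofPred_eq, mem_powersetCard, mem_insert_self, true_and,
    mem_insert, not_or, card_insert_of_notMem (haS hSY), and_true]
  exact ⟨insert_subset ha (hSY.trans ((erase_subset _ _).trans (erase_subset _ _))),
    hba, fun h => by simpa using hSY h⟩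

theorem two_mul_choose_le_five_mul_card_separating {Y : Finset α} {k : ℕ} {u v : α}
    (hu : u ∈ Y) (huv : u ≠ v) (h9 : 9 * k ≤ 5 * #Y) (h2 : #Y ≤ 2 * k) :
    2 * (#Y).choose k ≤ 5 * #{B ∈ Y.powersetCard k | u ∈ B ∧ v ∉ B ∨ v ∈ B ∧ u ∉ B} := by
  obtain ⟨k, rfl⟩ : ∃ j, k = j + 1 := ⟨k - 1, by have := card_pos.2 ⟨u, hu⟩; omega⟩
  rw [filter_or, card_union_of_disjoint (disjoint_filter.2 fun B _ h h' => h'.2 h.1)]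
  have hu' := card_powersetCard_erase_erase_le hu huv.symm k
  rw [card_powersetCard] at hu'
  by_cases hv : v ∈ Y
  · have hv' := card_powersetCard_erase_erase_le hv huv k
    rw [card_powersetCard, erase_right_comm] at hv'
    have hcard : #((Y.erase u).erase v) + 2 = #Y := by
      rw [card_erase_of_mem (mem_erase.2 ⟨huv.symm, hv⟩), card_erase_of_mem hu]
      have := card_pos.2 ⟨u, hu⟩
      have : 1 < #Y := one_lt_card.2 ⟨u, hu, v, hv, huv⟩
      omega
    have := Nat.choose_add_two_succ_le_five_mul_choose (m := #((Y.erase u).erase v))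
      (k := k) (by omega) (by omega)
    rw [hcard] at this
    omega
  · have hcard : #((Y.erase u).erase v) + 1 = #Y := by
      rw [erase_eq_of_notMem fun h => hv (mem_of_mem_erase h), card_erase_add_one hu]
    have := Nat.choose_succ_succ_le_two_mul_choose (m := #((Y.erase u).erase v)) (k := k)
      (by omega)
    rw [hcard] at this
    omega

theorem two_mul_choose_le_five_mul_card_cutting {Y : Finset α} {k : ℕ} {e : Sym2 α}
    [DecidablePred fun B : Finset α => (∃ x ∈ e, x ∈ B) ∧ ∃ y ∈ e, y ∉ B] (he : ¬e.IsDiag)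
    (hY : ∃ x ∈ e, x ∈ Y) (h9 : 9 * k ≤ 5 * #Y) (h2 : #Y ≤ 2 * k) :
    2 * (#Y).choose k ≤ 5 * #{B ∈ Y.powersetCard k | (∃ x ∈ e, x ∈ B) ∧ ∃ y ∈ e, y ∉ B} := by
  obtain ⟨u, hue, hu⟩ := hY
  obtain ⟨v, rfl⟩ := Sym2.mem_iff_exists.1 hue
  convert two_mul_choose_le_five_mul_card_separating hu (Sym2.mk_isDiag_iff.not.1 he) h9 h2
    using 3
  refine filter_congr fun B _ => ?_
  simp only [Sym2.mem_iff, exists_eq_or_imp, exists_eq_left]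
  tauto

theorem exists_mem_powersetCard_two_div_five_mul_card_le_card_cutting {Y : Finset α} {k : ℕ}
    {s : Finset (Sym2 α)}
    [∀ (e : Sym2 α) (B : Finset α), Decidable ((∃ x ∈ e, x ∈ B) ∧ ∃ y ∈ e, y ∉ B)]
    (hs : ∀ e ∈ s, ¬e.IsDiag ∧ ∃ x ∈ e, x ∈ Y) (h9 : 9 * k ≤ 5 * #Y) (h2 : #Y ≤ 2 * k) :
    ∃ B ∈ Y.powersetCard k,
      (2 / 5 : ℝ) * #s ≤ #{e ∈ s | (∃ x ∈ e, x ∈ B) ∧ ∃ y ∈ e, y ∉ B} := by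
  refine exists_mem_mul_card_le_card_bipartiteBelow _ (powersetCard_nonempty.2 (by omega))
    fun e he => ?_
  have := two_mul_choose_le_five_mul_card_cutting (hs e he).1 (hs e he).2 h9 h2
  have := (Nat.cast_le (α := ℝ)).2 this
  push_cast at this
  rw [card_powersetCard]
  unfold bipartiteAbove
  linarith

end Finset

namespace SimpleGraph

variable {V : Type*} [Fintype V] (G : SimpleGraph V) [DecidableRel G.Adj]

theorem mul_card_le_degree_le_two_mul_card_edgeFinset (c : ℝ) :
    c * #{v | c ≤ (G.degree v : ℝ)} ≤ 2 * #G.edgeFinset := by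
  calc c * #{v | c ≤ (G.degree v : ℝ)} = ∑ _v ∈ {v | c ≤ (G.degree v : ℝ)}, c := by
        rw [sum_const, nsmul_eq_mul, mul_comm]
    _ ≤ ∑ v ∈ {v | c ≤ (G.degree v : ℝ)}, (G.degree v : ℝ) :=
        sum_le_sum fun v hv => (mem_filter.1 hv).2
    _ ≤ ∑ v, (G.degree v : ℝ) :=
        sum_le_sum_of_subset_of_nonneg (subset_univ _) fun _ _ _ => by positivity
    _ = 2 * #G.edgeFinset := by exact_mod_cast G.sum_degrees_eq_twice_card_edges

theorem ten_mul_card_le_degree_le {d : ℝ} (hd0 : 0 < d)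
    (hd : 2 * (#G.edgeFinset : ℝ) = d * Fintype.card V) :
    10 * #{v | 10 * d ≤ (G.degree v : ℝ)} ≤ Fintype.card V := by
  have := G.mul_card_le_degree_le_two_mul_card_edgeFinset (10 * d)
  have : (10 * #{v | 10 * d ≤ (G.degree v : ℝ)} : ℝ) * d ≤ Fintype.card V * d := by linarith
  exact_mod_cast le_of_mul_le_mul_right this hd0

variable [DecidableEq V] {d : ℝ}

theorem card_edgeFinset_sub_le_card_filter_exists_notMem
    (hsub : ∀ S : Finset V, S.Nonempty →
      2 * (#{e ∈ G.edgeFinset | ∀ x ∈ e, x ∈ S} : ℝ) ≤ d * #S) (S : Finset V) :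
    #G.edgeFinset - d * #S / 2 ≤ (#{e ∈ G.edgeFinset | ∃ x ∈ e, x ∉ S} : ℝ) := by
  have hinside : 2 * (#{e ∈ G.edgeFinset | ∀ x ∈ e, x ∈ S} : ℝ) ≤ d * #S := by
    rcases S.eq_empty_or_nonempty with rfl | hS
    · simp [fun e : Sym2 V => not_forall_not.2 ⟨_, e.out_fst_mem⟩]
    · exact hsub S hS
  have hsplit := card_filter_add_card_filter_not (s := G.edgeFinset)
    (p := fun e => ∀ x ∈ e, x ∈ S)
  simp only [not_forall, exists_prop] at hsplit
  have : (#{e ∈ G.edgeFinset | ∀ x ∈ e, x ∈ S} : ℝ) + #{e ∈ G.edgeFinset | ∃ x ∈ e, x ∉ S}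
      = #G.edgeFinset := by exact_mod_cast hsplit
  linarith

theorem nine_div_ten_mul_card_edgeFinset_le_card_filter_exists_not_le_degree (hd0 : 0 < d)
    (hd : 2 * (#G.edgeFinset : ℝ) = d * Fintype.card V)
    (hsub : ∀ S : Finset V, S.Nonempty →
      2 * (#{e ∈ G.edgeFinset | ∀ x ∈ e, x ∈ S} : ℝ) ≤ d * #S) :
    9 / 10 * (#G.edgeFinset : ℝ) ≤
      #{e ∈ G.edgeFinset | ∃ x ∈ e, x ∉ ({v | 10 * d ≤ (G.degree v : ℝ)} : Finset V)} := by
  have hX := G.ten_mul_card_le_degree_le hd0 hd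
  have := G.card_edgeFinset_sub_le_card_filter_exists_notMem hsub {v | 10 * d ≤ (G.degree v : ℝ)}
  have : d * (10 * #{v | 10 * d ≤ (G.degree v : ℝ)}) ≤ d * Fintype.card V :=
    mul_le_mul_of_nonneg_left (by exact_mod_cast hX) hd0.le
  linarith

end SimpleGraph

/-- If `G` on an even number `n` of vertices has average degree `d > 0` and
every induced subgraph has average degree at most `d`, then there is a bipartite
subgraph `G' = G[A, B]` with `|B| = n/2`, `e(G') ≥ 0.36·e(G)`, and every vertex
of `B` has degree (in `G'`) less than `30·d(G')`, where `d(G') = 2e(G')/n`. -/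
theorem bipartite_cleaning {V : Type*} [Fintype V] [DecidableEq V]
    (G : SimpleGraph V) [DecidableRel G.Adj] (d : ℝ) (hd0 : 0 < d)
    (hn : Even (Fintype.card V))
    (hd : 2 * (G.edgeFinset.card : ℝ) = d * (Fintype.card V : ℝ))
    (hsub : ∀ S : Finset V, S.Nonempty →
      2 * ((G.edgeFinset.filter (fun e => ∀ x ∈ e, x ∈ S)).card : ℝ) ≤ d * (S.card : ℝ)) :
    ∃ B : Finset V, 2 * B.card = Fintype.card V ∧
      0.36 * (G.edgeFinset.card : ℝ) ≤
        ((G.edgeFinset.filter (fun e => (∃ x ∈ e, x ∈ B) ∧ ∃ y ∈ e, y ∉ B)).card : ℝ) ∧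
      ∀ v ∈ B,
        (((G.neighborFinset v).filter (fun x => x ∉ B)).card : ℝ) <
          30 * (2 * ((G.edgeFinset.filter
            (fun e => (∃ x ∈ e, x ∈ B) ∧ ∃ y ∈ e, y ∉ B)).card : ℝ) /
              (Fintype.card V : ℝ)) := by
  obtain ⟨k, hk⟩ := hn
  have hX := G.ten_mul_card_le_degree_le hd0 hd
  have hs := G.nine_div_ten_mul_card_edgeFinset_le_card_filter_exists_not_le_degree hd0 hd hsub
  set X : Finset V := {v | 10 * d ≤ (G.degree v : ℝ)}
  obtain ⟨B, hB, hBs⟩ := exists_mem_powersetCard_two_div_five_mul_card_le_card_cutting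
    (Y := Xᶜ) (k := k) (s := {e ∈ G.edgeFinset | ∃ x ∈ e, x ∉ X})
    (fun e he => by
      obtain ⟨he, x, hxe, hx⟩ := mem_filter.1 he
      exact ⟨G.not_isDiag_of_mem_edgeSet (G.mem_edgeFinset.1 he), x, hxe, mem_compl.2 hx⟩)
    (by rw [card_compl]; omega) (by rw [card_compl]; omega)
  obtain ⟨hBX, hBk⟩ := mem_powersetCard.1 hB
  have hcut : 0.36 * (#G.edgeFinset : ℝ) ≤
      #{e ∈ G.edgeFinset | (∃ x ∈ e, x ∈ B) ∧ ∃ y ∈ e, y ∉ B} := by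
    have := card_le_card <| filter_subset_filter
      (fun e : Sym2 V => (∃ x ∈ e, x ∈ B) ∧ ∃ y ∈ e, y ∉ B)
      (filter_subset (fun e => ∃ x ∈ e, x ∉ X) G.edgeFinset)
    have := (Nat.cast_le (α := ℝ)).2 this
    linarith
  refine ⟨B, by omega, hcut, fun v hv => ?_⟩
  have hdeg : G.degree v < 10 * d := by simpa [X] using mem_compl.1 (hBX hv)
  have hn : (0 : ℝ) < Fintype.card V := by exact_mod_cast Fintype.card_pos_iff.2 ⟨v⟩
  calc (#{x ∈ G.neighborFinset v | x ∉ B} : ℝ) ≤ G.degree v := by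
        exact_mod_cast (card_filter_le _ _).trans (G.card_neighborFinset_eq_degree v).le
    _ < 10 * d := hdeg
    _ ≤ _ := by
      rw [← mul_div_assoc, le_div_iff₀ hn]
      linarith
end

section
/- Let G be an (ε1, t)-expander on n vertices and let L ⊆ V(G) be a set of vertices with |L| ≤ (ε1·t)/(16·log²(7.5)) (so that |L| is at most half the minimum guaranteed expansion). Then the graph G' = G − L is an (ε1/8, t')-expander for any t' with t ≤ t' ≤ 4t. -/
open Finset
open scoped Classical

/-- The Komlós–Szemerédi expansion rate function. -/
noncomputable def epsFun (ε1 t x : ℝ) : ℝ :=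
  if x < t / 5 then 0 else ε1 / (Real.log (15 * x / t)) ^ 2

/-- The external neighborhood `Γ(X) = N(X) \ X` of a vertex set `X`. -/
noncomputable def extNbhd {V : Type*} [Fintype V] (G : SimpleGraph V) (X : Finset V) :
    Finset V :=
  Finset.univ.filter (fun v => v ∉ X ∧ ∃ u ∈ X, G.Adj u v)

/-- `G` is an `(ε₁, t)`-expander: every vertex set `X` with
`t/2 ≤ |X| ≤ |V|/2` satisfies `|Γ(X)| ≥ ε(|X|)·|X|`. -/
def IsExpander {V : Type*} [Fintype V] (G : SimpleGraph V) (ε1 t : ℝ) : Prop :=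
  ∀ X : Finset V, t / 2 ≤ (X.card : ℝ) → (X.card : ℝ) ≤ (Fintype.card V : ℝ) / 2 →
    epsFun ε1 t (X.card : ℝ) * (X.card : ℝ) ≤ ((extNbhd G X).card : ℝ)

/-!
An external neighbour in `G` of (the lift of) `X ⊆ V(G − L)` that avoids `L` is one in `G − L`,
so deleting `L` costs at most `|L|` of expansion. Passing from `t` to `t' ≤ 4t` at most doubles
`log (15x/t)` (as `t'/t ≤ 4 ≤ 15x/t'`), which turns the rate `ε₁` into `ε₁/4`; and `x ↦ x·ε(x)`
increases on `x ≥ t'/2`, so `x·ε(x, ε₁/8, t') ≥ ε₁t'/(16 log² 7.5) ≥ |L|`. Half of the rate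
`ε₁/4` thus pays for `L`, and the other half, `ε₁/8`, survives.
-/

lemma epsFun_of_le {e t x : ℝ} (h : t / 5 ≤ x) :
    epsFun e t x = e / Real.log (15 * x / t) ^ 2 := by
  rw [epsFun, if_neg h.not_gt]

lemma epsFun_div_const (e c t x : ℝ) : epsFun (e / c) t x = epsFun e t x / c := by
  unfold epsFun
  split_ifs <;> ring

lemma Real.two_le_log_seven_half : (2 : ℝ) ≤ Real.log 7.5 := by
  rw [Real.le_log_iff_exp_le (by norm_num), show (2 : ℝ) = 1 + 1 by norm_num, Real.exp_add]
  nlinarith [Real.exp_one_lt_d9, Real.exp_pos 1]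

lemma Real.log_mul_le_two_mul_log {y r : ℝ} (hr : 0 < r) (hry : r ≤ y) :
    Real.log (y * r) ≤ 2 * Real.log y := by
  rw [Real.log_mul (hr.trans_le hry).ne' hr.ne']
  linarith [Real.log_le_log hr hry]

lemma sq_add_le_sq_mul_exp {a w : ℝ} (ha : 2 ≤ a) (hw : 0 ≤ w) :
    (a + w) ^ 2 ≤ a ^ 2 * Real.exp w := by
  have hexp := Real.quadratic_le_exp_of_nonneg hw
  have hlin : 2 * a * w ≤ a ^ 2 * w := by nlinarith [mul_nonneg (by linarith : 0 ≤ a - 2) hw]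
  have hquad : w ^ 2 ≤ a ^ 2 * (w ^ 2 / 2) := by nlinarith [sq_nonneg w]
  nlinarith [mul_le_mul_of_nonneg_left hexp (sq_nonneg a)]

/-- Substituting `x = (t/2)·exp w`, this is `sq_add_le_sq_mul_exp` with `a = log 7.5`. -/
lemma log_sq_le_of_half_le {t x : ℝ} (ht : 0 < t) (hx : t / 2 ≤ x) :
    Real.log (15 * x / t) ^ 2 ≤ Real.log 7.5 ^ 2 * (2 * x / t) := by
  have hu : 1 ≤ 2 * x / t := by rw [le_div_iff₀ ht]; linarith
  have hsplit : Real.log (15 * x / t) = Real.log 7.5 + Real.log (2 * x / t) := by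
    rw [← Real.log_mul (by norm_num) (by positivity)]
    congr 1
    field_simp
    ring
  have key := sq_add_le_sq_mul_exp Real.two_le_log_seven_half (Real.log_nonneg hu)
  rwa [Real.exp_log (by positivity), ← hsplit] at key

lemma half_mul_le_epsFun_mul_self {e t x : ℝ} (he : 0 ≤ e) (ht : 0 < t) (hx : t / 2 ≤ x) :
    e * t / (2 * Real.log 7.5 ^ 2) ≤ epsFun e t x * x := by
  have hlog : 0 < Real.log (15 * x / t) :=
    Real.log_pos (by rw [lt_div_iff₀ ht]; linarith)
  have hsq := log_sq_le_of_half_le ht hx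
  rw [epsFun_of_le (by linarith), div_mul_eq_mul_div,
    div_le_div_iff₀ (by positivity) (by positivity)]
  calc e * t * Real.log (15 * x / t) ^ 2
      ≤ e * t * (Real.log 7.5 ^ 2 * (2 * x / t)) := by gcongr
    _ = e * x * (2 * Real.log 7.5 ^ 2) := by field_simp

lemma epsFun_le_four_mul_epsFun {e t t' x : ℝ} (he : 0 ≤ e) (ht : 0 < t) (htt' : t ≤ t')
    (ht' : t' ≤ 4 * t) (hx : t' / 2 ≤ x) :
    epsFun e t' x ≤ 4 * epsFun e t x := by
  have ht'0 : 0 < t' := ht.trans_le htt'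
  have hratio : t' / t ≤ 15 * x / t' := by
    rw [div_le_div_iff₀ ht ht'0]
    nlinarith
  have hlog_t : 0 < Real.log (15 * x / t) :=
    Real.log_pos (by rw [lt_div_iff₀ ht]; linarith)
  have hlog_le : Real.log (15 * x / t) ≤ 2 * Real.log (15 * x / t') := by
    have := Real.log_mul_le_two_mul_log (by positivity) hratio
    rwa [div_mul_div_comm, mul_comm t' t, mul_div_mul_right _ _ ht'0.ne'] at this
  rw [epsFun_of_le (by linarith), epsFun_of_le (by linarith), mul_div_assoc',
    div_le_div_iff₀ (by nlinarith) (by positivity)]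
  nlinarith [mul_le_mul_of_nonneg_left (pow_le_pow_left₀ hlog_t.le hlog_le 2) he]

lemma card_extNbhd_le_card_extNbhd_induce_add_card {V : Type*} [Fintype V] [DecidableEq V]
    (G : SimpleGraph V) (L : Finset V) (X : Finset ↥{v : V | v ∉ L}) :
    #(extNbhd G (X.map (Function.Embedding.subtype _))) ≤
      #(extNbhd (G.induce {v : V | v ∉ L}) X) + #L := by
  have hsub : extNbhd G (X.map (Function.Embedding.subtype _)) \ L ⊆
      (extNbhd (G.induce {v : V | v ∉ L}) X).map (Function.Embedding.subtype _) := by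
    intro v hv
    obtain ⟨hvΓ, hvL⟩ := mem_sdiff.mp hv
    simp only [extNbhd, mem_filter, mem_univ, true_and, mem_map,
      Function.Embedding.subtype_apply] at hvΓ ⊢
    obtain ⟨hvX, _, ⟨u, huX, rfl⟩, hadj⟩ := hvΓ
    exact ⟨⟨v, hvL⟩, ⟨fun hv' => hvX ⟨_, hv', rfl⟩, u, huX, hadj⟩, rfl⟩
  calc #(extNbhd G (X.map (Function.Embedding.subtype _)))
      ≤ #(extNbhd G (X.map (Function.Embedding.subtype _)) \ L) + #L :=
        card_le_card_sdiff_add_card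
    _ ≤ #(extNbhd (G.induce {v : V | v ∉ L}) X) + #L := by
        gcongr
        simpa using card_le_card hsub

/-- If `G` is an `(ε₁, t)`-expander and `L` is a vertex set with
`|L| ≤ ε₁·t/(16·log²(7.5))`, then `G − L` is an `(ε₁/8, t')`-expander for any
`t ≤ t' ≤ 4t`. -/
theorem expander_minus_small_set {V : Type*} [Fintype V] [DecidableEq V]
    (G : SimpleGraph V) (ε1 t t' : ℝ) (hε : 0 < ε1) (ht : 0 < t)
    (hexp : IsExpander G ε1 t) (L : Finset V)
    (hL : (L.card : ℝ) ≤ ε1 * t / (16 * (Real.log 7.5) ^ 2))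
    (ht1 : t ≤ t') (ht2 : t' ≤ 4 * t) :
    IsExpander (G.induce {v : V | v ∉ L}) (ε1 / 8) t' := by
  intro X hX hXV
  set Y := X.map (Function.Embedding.subtype _)
  have hY : (#Y : ℝ) = #X := by rw [card_map]
  have hcard : (Fintype.card ↥{v : V | v ∉ L} : ℝ) ≤ Fintype.card V := by
    exact_mod_cast Fintype.card_subtype_le _
  have hGY := hexp Y (by rw [hY]; linarith) (by rw [hY]; linarith)
  rw [hY] at hGY
  have hdel : (#(extNbhd G Y) : ℝ) ≤ #(extNbhd (G.induce {v : V | v ∉ L}) X) + #L := by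
    exact_mod_cast card_extNbhd_le_card_extNbhd_induce_add_card G L X
  have hrate : 2 * epsFun (ε1 / 8) t' #X ≤ epsFun ε1 t #X := by
    rw [epsFun_div_const]
    linarith [epsFun_le_four_mul_epsFun hε.le ht ht1 ht2 hX]
  have hsmall : (#L : ℝ) ≤ epsFun (ε1 / 8) t' #X * #X := by
    refine le_trans ?_ (half_mul_le_epsFun_mul_self (by positivity) (ht.trans_le ht1) hX)
    rw [show ε1 * t / (16 * Real.log 7.5 ^ 2) = ε1 / 8 * t / (2 * Real.log 7.5 ^ 2) by ring]
      at hL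
    exact hL.trans (by gcongr)
  nlinarith [mul_le_mul_of_nonneg_right hrate (Nat.cast_nonneg (α := ℝ) #X)]
end

section
/- McDiarmid's bounded differences inequality: Let X = (X_1,…,X_n) be independent random variables with X_k taking values in a set A_k, and let f : ΠA_k → ℝ satisfy |f(x) − f(x')| ≤ σ_k whenever x and x' differ only in the k-th coordinate. Let μ = E[f(X)]. Then for any t ≥ 0, P(|f(X) − μ| ≥ t) ≤ 2·exp(−2t²/Σ_k σ_k²). -/
/-!
Write `f − E f = (f − g) + (g − E g)`, where `g` averages `f` over the first coordinate. For each
fixed value of the remaining coordinates, `f − g` is a centred function of the first coordinate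
with range at most `σ₁`, hence `(σ₁/2)²`-sub-Gaussian by Hoeffding's lemma. The average `g` has
bounded differences `σ₂, …, σₙ`, so by induction `g − E g` is `(∑_{k ≥ 2} σₖ²/4)`-sub-Gaussian, and
by Fubini the parameters of such a fibred sum add up. Independence identifies the law of `X` with
the product of its marginals, and the Chernoff bound for a `(∑ σₖ²/4)`-sub-Gaussian variable,
applied to both tails, gives `2 exp (−2t² / ∑ σₖ²)`.
-/

open MeasureTheory ProbabilityTheory Real
open scoped NNReal

section

variable {Ω α β : Type*} {mΩ : MeasurableSpace Ω} {mα : MeasurableSpace α}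
  {mβ : MeasurableSpace β}

lemma exists_forall_mem_Icc_of_abs_sub_le [Nonempty α] {X : α → ℝ} {c : ℝ}
    (h : ∀ x x', |X x - X x'| ≤ c) : ∃ a, ∀ x, X x ∈ Set.Icc a (a + c) := by
  obtain ⟨x₀⟩ := ‹Nonempty α›
  have hbdd : BddBelow (Set.range X) :=
    ⟨X x₀ - c, by rintro _ ⟨x, rfl⟩; linarith [(abs_le.mp (h x₀ x)).2]⟩
  refine ⟨⨅ x, X x, fun x => ⟨ciInf_le hbdd x, ?_⟩⟩
  have : X x - c ≤ ⨅ x, X x := le_ciInf fun x' => by linarith [(abs_le.mp (h x x')).2]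
  linarith

lemma MeasureTheory.Integrable.of_abs_sub_le {μ : Measure Ω} [IsFiniteMeasure μ] {X : Ω → ℝ}
    (hX : AEMeasurable X μ) {c : ℝ} (h : ∀ ω ω', |X ω - X ω'| ≤ c) : Integrable X μ := by
  cases isEmpty_or_nonempty Ω
  · exact .of_isEmpty
  · obtain ⟨a, ha⟩ := exists_forall_mem_Icc_of_abs_sub_le h
    exact .of_mem_Icc a (a + c) hX (ae_of_all _ ha)

def HasBoundedDifferences {ι : Type*} {A : ι → Type*} (f : (∀ k, A k) → ℝ) (σ : ι → ℝ) :
    Prop :=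
  ∀ (k : ι) (x x' : ∀ j, A j), (∀ j, j ≠ k → x j = x' j) → |f x - f x'| ≤ σ k

lemma HasBoundedDifferences.integral {ι : Type*} {A : ι → Type*} {μ : Measure α}
    [IsProbabilityMeasure μ] {F : α → (∀ k, A k) → ℝ} {σ : ι → ℝ}
    (hF : ∀ x, HasBoundedDifferences (F x) σ) (hint : ∀ y, Integrable (fun x => F x y) μ) :
    HasBoundedDifferences (fun y => ∫ x, F x y ∂μ) σ := by
  intro k y y' hyy'
  rw [← integral_sub (hint y) (hint y')]
  simpa using norm_integral_le_of_norm_le_const (μ := μ)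
    (ae_of_all _ fun x => (norm_eq_abs _).trans_le (hF x k y y' hyy'))

section InsertNth

variable {n : ℕ} {A : Fin (n + 1) → Type*} {f : (∀ k, A k) → ℝ} {σ : Fin (n + 1) → ℝ}

lemma HasBoundedDifferences.abs_sub_insertNth_le (hf : HasBoundedDifferences f σ)
    (i : Fin (n + 1)) (x x' : A i) (y : ∀ j, A (i.succAbove j)) :
    |f (i.insertNth x y) - f (i.insertNth x' y)| ≤ σ i :=
  hf i _ _ fun l hl => by obtain ⟨j, rfl⟩ := Fin.exists_succAbove_eq hl; simp

lemma HasBoundedDifferences.insertNth (hf : HasBoundedDifferences f σ) (i : Fin (n + 1))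
    (x : A i) :
    HasBoundedDifferences (fun y => f (i.insertNth x y)) (fun j => σ (i.succAbove j)) := by
  intro k y y' hyy'
  refine hf _ _ _ fun l hl => ?_
  rcases eq_or_ne l i with rfl | hli
  · simp
  · obtain ⟨j, rfl⟩ := Fin.exists_succAbove_eq hli
    simp [hyy' j (by rintro rfl; exact hl rfl)]

end InsertNth

namespace ProbabilityTheory

lemma hasSubgaussianMGF_of_abs_sub_le {μ : Measure Ω} [IsProbabilityMeasure μ] {X : Ω → ℝ}
    (hX : AEMeasurable X μ) {c : ℝ} (h : ∀ ω ω', |X ω - X ω'| ≤ c) :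
    HasSubgaussianMGF (fun ω => X ω - μ[X]) ((‖c‖₊ / 2) ^ 2) μ := by
  have := nonempty_of_isProbabilityMeasure μ
  obtain ⟨a, ha⟩ := exists_forall_mem_Icc_of_abs_sub_le h
  simpa using hasSubgaussianMGF_of_mem_Icc hX (ae_of_all _ ha)

namespace HasSubgaussianMGF

lemma add_prod_of_forall {μ : Measure α} {ν : Measure β} [SFinite μ] [SFinite ν]
    {Y : α × β → ℝ} {X : β → ℝ} {cY cX : ℝ≥0} (hYm : AEStronglyMeasurable Y (μ.prod ν))
    (hY : ∀ y, HasSubgaussianMGF (fun x => Y (x, y)) cY μ) (hX : HasSubgaussianMGF X cX ν) :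
    HasSubgaussianMGF (fun p => Y p + X p.2) (cY + cX) (μ.prod ν) := by
  have hslice_le (t : ℝ) (y : β) :
      ∫ x, exp (t * (Y (x, y) + X y)) ∂μ ≤ exp (cY * t ^ 2 / 2) * exp (t * X y) := by
    simp_rw [mul_add, exp_add, integral_mul_const]
    gcongr
    exact (hY y).mgf_le t
  have hint (t : ℝ) : Integrable (fun p => exp (t * (Y p + X p.2))) (μ.prod ν) := by
    have hm : AEStronglyMeasurable (fun p : α × β => exp (t * (Y p + X p.2))) (μ.prod ν) :=
      continuous_exp.comp_aestronglyMeasurable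
        ((hYm.add hX.aestronglyMeasurable.comp_snd).const_mul t)
    refine (integrable_prod_iff' hm).2 ⟨ae_of_all _ fun y => ?_, ?_⟩
    · simp_rw [mul_add, exp_add]
      exact ((hY y).integrable_exp_mul t).mul_const _
    · refine ((hX.integrable_exp_mul t).const_mul (exp (cY * t ^ 2 / 2))).mono'
        hm.norm.prod_swap.integral_prod_right' (ae_of_all _ fun y => ?_)
      simp_rw [norm_eq_abs, abs_of_pos (exp_pos _)]
      rw [abs_of_nonneg (integral_nonneg fun _ => (exp_pos _).le)]
      exact hslice_le t y
  refine ⟨hint, fun t => ?_⟩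
  calc mgf (fun p => Y p + X p.2) (μ.prod ν) t
      = ∫ y, ∫ x, exp (t * (Y (x, y) + X y)) ∂μ ∂ν := integral_prod_symm _ (hint t)
    _ ≤ ∫ y, exp (cY * t ^ 2 / 2) * exp (t * X y) ∂ν :=
      integral_mono_of_nonneg (ae_of_all _ fun y => by positivity)
        ((hX.integrable_exp_mul t).const_mul _) (ae_of_all _ (hslice_le t))
    _ ≤ exp (↑(cY + cX) * t ^ 2 / 2) := by
      rw [integral_const_mul, NNReal.coe_add, add_mul, add_div, exp_add]
      gcongr
      exact hX.mgf_le t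

lemma measure_abs_ge_le {μ : Measure Ω} [IsFiniteMeasure μ] {X : Ω → ℝ} {c : ℝ≥0}
    (h : HasSubgaussianMGF X c μ) {ε : ℝ} (hε : 0 ≤ ε) :
    μ {ω | ε ≤ |X ω|} ≤ ENNReal.ofReal (2 * exp (-ε ^ 2 / (2 * c))) := by
  have tail {Y : Ω → ℝ} (hY : HasSubgaussianMGF Y c μ) :
      μ {ω | ε ≤ Y ω} ≤ ENNReal.ofReal (exp (-ε ^ 2 / (2 * c))) := by
    rw [← ofReal_measureReal]
    exact ENNReal.ofReal_le_ofReal (hY.measure_ge_le hε)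
  calc μ {ω | ε ≤ |X ω|} ≤ μ ({ω | ε ≤ X ω} ∪ {ω | ε ≤ (-X) ω}) :=
        measure_mono fun ω (hω : ε ≤ |X ω|) => show ε ≤ X ω ∨ ε ≤ -X ω from le_abs.mp hω
    _ ≤ μ {ω | ε ≤ X ω} + μ {ω | ε ≤ (-X) ω} := measure_union_le _ _
    _ ≤ _ := by
      rw [two_mul, ENNReal.ofReal_add (by positivity) (by positivity)]
      exact add_le_add (tail h) (tail h.neg)

end HasSubgaussianMGF

lemma hasSubgaussianMGF_prod_of_abs_sub_le {μ : Measure α} {ν : Measure β}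
    [IsProbabilityMeasure μ] [IsFiniteMeasure ν] {F : α × β → ℝ} (hF : Measurable F)
    {c : ℝ} (hosc : ∀ x x' y, |F (x, y) - F (x', y)| ≤ c) {c' : ℝ≥0}
    (hg : HasSubgaussianMGF (fun y => ∫ x, F (x, y) ∂μ - ∫ y', ∫ x, F (x, y') ∂μ ∂ν) c' ν) :
    HasSubgaussianMGF (fun p => F p - ∫ q, F q ∂(μ.prod ν)) ((‖c‖₊ / 2) ^ 2 + c') (μ.prod ν) := by
  set g : β → ℝ := fun y => ∫ x, F (x, y) ∂μ
  set m := ∫ y, g y ∂ν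
  have hgm : StronglyMeasurable g := hF.stronglyMeasurable.integral_prod_left'
  have hsum : HasSubgaussianMGF (fun p => (F p - g p.2) + (g p.2 - m)) _ (μ.prod ν) :=
    HasSubgaussianMGF.add_prod_of_forall
      (hF.aestronglyMeasurable.sub (hgm.comp_measurable measurable_snd).aestronglyMeasurable)
      (fun y => hasSubgaussianMGF_of_abs_sub_le (hF.comp measurable_prodMk_right).aemeasurable
        fun x x' => hosc x x' y) hg
  simp_rw [sub_add_sub_cancel] at hsum
  have hFint : Integrable F (μ.prod ν) :=
    (hsum.integrable.add (integrable_const m)).congr (ae_of_all _ fun p => sub_add_cancel (F p) m)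
  rwa [integral_prod_symm F hFint]

theorem hasSubgaussianMGF_pi_of_hasBoundedDifferences {n : ℕ} {A : Fin n → Type*}
    [∀ k, MeasurableSpace (A k)] (ν : ∀ k, Measure (A k)) [∀ k, IsProbabilityMeasure (ν k)]
    {f : (∀ k, A k) → ℝ} (hf : Measurable f) {σ : Fin n → ℝ} (hbd : HasBoundedDifferences f σ) :
    HasSubgaussianMGF (fun x => f x - ∫ y, f y ∂Measure.pi ν) (∑ k, (‖σ k‖₊ / 2) ^ 2)
      (Measure.pi ν) := by
  induction n with
  | zero =>
    refine HasSubgaussianMGF.fun_zero.congr (ae_of_all _ fun x => ?_)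
    have hconst : f = fun _ => f x := funext fun y => congrArg f (Subsingleton.elim y x)
    rw [hconst]
    simp
  | succ n ih =>
    set e := MeasurableEquiv.piFinSuccAbove A 0
    set F : A 0 × (∀ j, A (Fin.succAbove 0 j)) → ℝ := fun p => f (e.symm p)
    have hF : Measurable F := hf.comp e.symm.measurable
    have hg := ih (fun j => ν (Fin.succAbove 0 j))
      (hF.stronglyMeasurable.integral_prod_left' (μ := ν 0)).measurable
      (HasBoundedDifferences.integral (fun x => hbd.insertNth 0 x) fun y =>
        Integrable.of_abs_sub_le (hF.comp measurable_prodMk_right).aemeasurable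
          fun x x' => hbd.abs_sub_insertNth_le 0 x x' y)
    have hprod := hasSubgaussianMGF_prod_of_abs_sub_le hF (hbd.abs_sub_insertNth_le 0) hg
    have he : MeasurePreserving e (Measure.pi ν) _ := measurePreserving_piFinSuccAbove ν 0
    rw [← he.map_eq] at hprod
    rw [Fin.sum_univ_succAbove _ 0]
    convert hprod.of_map e.measurable.aemeasurable using 2 with x
    simp only [Function.comp_apply, F, integral_map_equiv, MeasurableEquiv.symm_apply_apply]

end ProbabilityTheory

end

/-- McDiarmid's independent bounded differences inequality: if `X₁, …, Xₙ` are
independent random variables with `Xₖ` valued in `A k`, and `f` satisfies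
`|f(x) − f(x')| ≤ σ k` whenever `x, x'` differ only in the `k`-th coordinate,
then for `t ≥ 0`,
`P(|f(X) − E[f(X)]| ≥ t) ≤ 2·exp(−2t²/Σₖ σₖ²)`. -/
theorem mcdiarmid_bounded_differences {Ω : Type*} [MeasurableSpace Ω]
    (μ : Measure Ω) [IsProbabilityMeasure μ]
    {n : ℕ} {A : Fin n → Type*} [mA : ∀ k, MeasurableSpace (A k)]
    (X : ∀ k, Ω → A k) (hXmeas : ∀ k, Measurable (X k))
    (hindep : ProbabilityTheory.iIndepFun X μ)
    (f : (∀ k, A k) → ℝ) (hf : Measurable f)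
    (σ : Fin n → ℝ)
    (hbd : ∀ (k : Fin n) (x x' : ∀ j, A j), (∀ j : Fin n, j ≠ k → x j = x' j) →
      |f x - f x'| ≤ σ k)
    (t : ℝ) (ht : 0 ≤ t) :
    μ {ω | t ≤ |f (fun k => X k ω) - ∫ ω', f (fun k => X k ω') ∂μ|} ≤
      ENNReal.ofReal (2 * Real.exp (-2 * t ^ 2 / ∑ k, (σ k) ^ 2)) := by
  have hX : Measurable fun ω k => X k ω := measurable_pi_lambda _ hXmeas
  have (k : Fin n) : IsProbabilityMeasure (μ.map (X k)) :=
    Measure.isProbabilityMeasure_map (hXmeas k).aemeasurable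
  have hpi := hasSubgaussianMGF_pi_of_hasBoundedDifferences (fun k => μ.map (X k)) hf hbd
  rw [← hindep.map_fun_eq_pi_map fun k => (hXmeas k).aemeasurable,
    integral_map hX.aemeasurable hf.aestronglyMeasurable] at hpi
  have hexp : -t ^ 2 / (2 * ((∑ k, (‖σ k‖₊ / 2) ^ 2 : ℝ≥0) : ℝ)) = -2 * t ^ 2 / ∑ k, σ k ^ 2 := by
    push_cast
    simp_rw [Real.norm_eq_abs, div_pow, sq_abs, ← Finset.sum_div]
    rw [show (2 : ℝ) * ((∑ k, σ k ^ 2) / 2 ^ 2) = (∑ k, σ k ^ 2) / 2 by ring, div_div_eq_mul_div]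
    ring
  simpa only [hexp, Function.comp_apply] using
    (hpi.of_map hX.aemeasurable).measure_abs_ge_le ht
end

section
/- Let c > 0 and let G = (A ∪ B, E) be a C4-free bipartite graph with every vertex of B having degree at most D. Let S ⊆ A be a 2-set and let M ⊆ N_2(S) be a set of vertices each having exactly 2 neighbors in Γ(S). Define two vertices u, v ∈ M to be in conflict if their connector sets C(u) = N(u) ∩ Γ(S) and C(v) = N(v) ∩ Γ(S) intersect. Then the conflict graph on M has maximum degree at most 2D, and hence M contains a pairwise conflict-free subset of size at least |M|/(2D). -/
open Finset
open scoped Classical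

/-- The connector set `C(v) = N(v) ∩ Γ(S)` of a vertex `v` relative to the
2-set `S = {s₁, s₂}`, where `Γ(S) = (N(s₁) ∪ N(s₂)) \ {s₁, s₂}`. -/
noncomputable def connector {V : Type*} [Fintype V] [DecidableEq V] (G : SimpleGraph V)
    (s1 s2 v : V) : Finset V :=
  G.neighborFinset v ∩ ((G.neighborFinset s1 ∪ G.neighborFinset s2) \ {s1, s2})

/-!
A vertex `u ∈ M` and every vertex conflicting with it are neighbours of one of the two vertices
of `C(u)`, which lie in `B` and so have degree at most `D`; hence the closed conflict
neighbourhood of `u` has at most `2D` vertices. Greedily keeping a vertex of `M` and discarding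
its closed conflict neighbourhood then leaves a conflict-free set of at least `|M| / (2D)`
vertices.
-/

namespace SimpleGraph

variable {V : Type*}

theorem exists_isIndepSet_subset_card_le_mul (H : SimpleGraph V) [DecidableRel H.Adj] (k : ℕ)
    (s : Finset V) (hk : ∀ u ∈ s, #{v ∈ s | H.Adj u v} < k) :
    ∃ t ⊆ s, H.IsIndepSet (t : Set V) ∧ #s ≤ k * #t := by
  induction s using Finset.strongInduction with
  | _ s ih =>
  rcases s.eq_empty_or_nonempty with rfl | ⟨u, hu⟩
  · exact ⟨∅, subset_rfl, by simp, by simp⟩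
  set N := insert u {v ∈ s | H.Adj u v}
  have hrest : s \ N ⊂ s :=
    sdiff_ssubset (insert_subset hu (filter_subset _ _)) ⟨u, mem_insert_self _ _⟩
  obtain ⟨t, hts, hind, hcard⟩ := ih _ hrest fun v hv =>
    (card_le_card (filter_subset_filter _ sdiff_subset)).trans_lt (hk v (mem_sdiff.1 hv).1)
  have hfar : ∀ v ∈ t, v ≠ u ∧ ¬H.Adj u v := fun v hv => by
    have hvs := mem_sdiff.1 (hts hv)
    simp only [N, mem_insert, mem_filter, not_or, not_and] at hvs
    exact ⟨hvs.2.1, hvs.2.2 hvs.1⟩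
  refine ⟨insert u t, insert_subset hu (hts.trans sdiff_subset), ?_, ?_⟩
  · rw [coe_insert]
    exact hind.insert fun v hv _ => ⟨(hfar v hv).2, fun h => (hfar v hv).2 h.symm⟩
  · calc #s ≤ #(s \ N) + #N := card_le_card_sdiff_add_card
      _ ≤ k * #t + k := add_le_add hcard (card_insert_le _ _ |>.trans (hk u hu))
      _ = k * #(insert u t) := by
        rw [card_insert_of_notMem fun h => (hfar u h).1 rfl, Nat.mul_succ]

variable [DecidableEq V] (G : SimpleGraph V) [∀ v, Fintype (G.neighborSet v)]

theorem card_insert_filter_not_disjoint_le {C : V → Finset V}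
    (hC : ∀ v, C v ⊆ G.neighborFinset v) {u : V} (hu : (C u).Nonempty) (M : Finset V) (D : ℕ)
    (hD : ∀ w ∈ C u, G.degree w ≤ D) :
    #(insert u {v ∈ M | v ≠ u ∧ ¬Disjoint (C u) (C v)}) ≤ #(C u) * D := by
  have hmem : ∀ v w, w ∈ C u → w ∈ C v →
      v ∈ (C u).biUnion fun w => G.neighborFinset w :=
    fun v w hwu hwv => mem_biUnion.2
      ⟨w, hwu, (G.mem_neighborFinset _ _).2 ((G.mem_neighborFinset _ _).1 (hC v hwv)).symm⟩
  have hsub : insert u {v ∈ M | v ≠ u ∧ ¬Disjoint (C u) (C v)} ⊆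
      (C u).biUnion fun w => G.neighborFinset w := by
    intro v hv
    rcases mem_insert.1 hv with rfl | hv
    · obtain ⟨w, hw⟩ := hu
      exact hmem v w hw hw
    · obtain ⟨w, hwu, hwv⟩ := not_disjoint_iff.1 (mem_filter.1 hv).2.2
      exact hmem v w hwu hwv
  refine (card_le_card hsub).trans (card_biUnion_le_card_mul _ _ _ fun w hw => ?_)
  rw [card_neighborFinset_eq_degree]
  exact hD w hw

end SimpleGraph

def conflictGraph {V : Type*} (C : V → Finset V) : SimpleGraph V where
  Adj u v := u ≠ v ∧ ¬Disjoint (C u) (C v)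
  symm := ⟨fun _ _ h => ⟨h.1.symm, fun hd => h.2 hd.symm⟩⟩
  loopless := ⟨fun _ h => h.1 rfl⟩

section Connector

variable {V : Type*} [Fintype V] [DecidableEq V] (G : SimpleGraph V)

theorem connector_subset_neighborFinset [∀ v, Fintype (G.neighborSet v)] (s1 s2 v : V) :
    connector G s1 s2 v ⊆ G.neighborFinset v :=
  fun w hw => by
    simp only [connector, mem_inter, SimpleGraph.mem_neighborFinset] at hw ⊢
    exact hw.1

theorem connector_subset_of_bipartite {A B : Finset V} (hdisj : Disjoint A B)
    (hbip : ∀ u w : V, G.Adj u w → (u ∈ A ∧ w ∈ B) ∨ (u ∈ B ∧ w ∈ A))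
    {s1 s2 : V} (hs1 : s1 ∈ A) (hs2 : s2 ∈ A) (v : V) : connector G s1 s2 v ⊆ B := by
  have hopp : ∀ s ∈ A, ∀ w, G.Adj s w → w ∈ B := fun s hs w h =>
    (hbip s w h).elim And.right fun h' => absurd hs (disjoint_right.1 hdisj h'.1)
  intro w hw
  simp only [connector, mem_inter, mem_sdiff, mem_union, SimpleGraph.mem_neighborFinset] at hw
  exact hw.2.1.elim (hopp s1 hs1 w) (hopp s2 hs2 w)

end Connector

theorem conflict_free_subset_general {V : Type*} [Fintype V] [DecidableEq V]
    (G : SimpleGraph V) [DecidableRel G.Adj]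
    (A B : Finset V) (hdisj : Disjoint A B)
    (hbip : ∀ u w : V, G.Adj u w → (u ∈ A ∧ w ∈ B) ∨ (u ∈ B ∧ w ∈ A))
    (D : ℕ) (hdeg : ∀ b ∈ B, G.degree b ≤ D)
    (s1 s2 : V) (hs1 : s1 ∈ A) (hs2 : s2 ∈ A)
    (M : Finset V)
    (hMC : ∀ v ∈ M, (connector G s1 s2 v).card = 2) :
    (∀ u ∈ M,
        (M.filter (fun v => v ≠ u ∧
          ¬ Disjoint (connector G s1 s2 u) (connector G s1 s2 v))).card ≤ 2 * D) ∧
    ∃ M' ⊆ M, (M.card : ℝ) / (2 * D) ≤ (M'.card : ℝ) ∧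
      ∀ u ∈ M', ∀ v ∈ M', u ≠ v →
        Disjoint (connector G s1 s2 u) (connector G s1 s2 v) := by
  set C := connector G s1 s2
  have hclosed :
      ∀ u ∈ M, #(insert u {v ∈ M | v ≠ u ∧ ¬Disjoint (C u) (C v)}) ≤ 2 * D := by
    intro u hu
    have hCu : #(C u) = 2 := hMC u hu
    have hne : (C u).Nonempty := card_pos.1 (by omega)
    rw [← hCu]
    exact G.card_insert_filter_not_disjoint_le (connector_subset_neighborFinset G s1 s2) hne M D
      fun w hw => hdeg w (connector_subset_of_bipartite G hdisj hbip hs1 hs2 u hw)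
  have hopen : ∀ u ∈ M, #{v ∈ M | v ≠ u ∧ ¬Disjoint (C u) (C v)} < 2 * D := fun u hu =>
    (card_lt_card (ssubset_insert (by simp))).trans_le (hclosed u hu)
  obtain ⟨M', hM'M, hind, hcard⟩ :=
    (conflictGraph C).exists_isIndepSet_subset_card_le_mul (2 * D) M fun u hu =>
      (card_le_card fun v hv => by
        obtain ⟨hvM, hvu, hmeet⟩ := mem_filter.1 hv
        exact mem_filter.2 ⟨hvM, hvu.symm, hmeet⟩).trans_lt (hopen u hu)
  refine ⟨fun u hu => (hopen u hu).le, M', hM'M, ?_,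
    fun u hu v hv huv => not_not.1 fun h => hind hu hv huv ⟨huv, h⟩⟩
  exact div_le_of_le_mul₀ (by positivity) (by positivity)
    (by exact_mod_cast hcard.trans_eq (mul_comm _ _))

/-- Conflict graph bound: in a `C₄`-free bipartite graph with all degrees in `B`
at most `D`, given a 2-set `S = {s₁, s₂} ⊆ A` and a set `M ⊆ N₂(S)` of vertices
each having exactly 2 neighbors in `Γ(S)`, the conflict graph on `M` (where two
vertices conflict iff their connector sets intersect) has maximum degree at most
`2D`, and `M` contains a pairwise conflict-free subset of size at least `|M|/(2D)`. -/
theorem conflict_free_subset {V : Type*} [Fintype V] [DecidableEq V]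
    (G : SimpleGraph V) [DecidableRel G.Adj] (hG : C4Free G) (c : ℝ) (hc : 0 < c)
    (A B : Finset V) (hdisj : Disjoint A B) (hpart : ∀ v : V, v ∈ A ∨ v ∈ B)
    (hbip : ∀ u w : V, G.Adj u w → (u ∈ A ∧ w ∈ B) ∨ (u ∈ B ∧ w ∈ A))
    (D : ℕ) (hdeg : ∀ b ∈ B, G.degree b ≤ D)
    (s1 s2 : V) (hne : s1 ≠ s2) (hs1 : s1 ∈ A) (hs2 : s2 ∈ A)
    (M : Finset V)
    (hM2 : ∀ v ∈ M, G.dist s1 v = 2 ∧ G.dist s2 v = 2)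
    (hMC : ∀ v ∈ M, (connector G s1 s2 v).card = 2) :
    (∀ u ∈ M,
        (M.filter (fun v => v ≠ u ∧
          ¬ Disjoint (connector G s1 s2 u) (connector G s1 s2 v))).card ≤ 2 * D) ∧
    ∃ M' ⊆ M, (M.card : ℝ) / (2 * D) ≤ (M'.card : ℝ) ∧
      ∀ u ∈ M', ∀ v ∈ M', u ≠ v →
        Disjoint (connector G s1 s2 u) (connector G s1 s2 v) :=
  conflict_free_subset_general G A B hdisj hbip D hdeg s1 s2 hs1 hs2 M hMC
end

section
/- In a C4-free bipartite graph G with parts A and B, for any 2-set S ⊆ A, any vertex u ∈ A \ S can be adjacent to the connector sets C(v) = N(v) ∩ Γ(S) of at most 2 vertices v ∈ N_2(S) whose connector sets are pairwise disjoint and of size 2 each. -/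
/-!
Every vertex `c` of a connector set `C(v)` is adjacent to `s₁` or to `s₂`, and in a `C₄`-free
graph two distinct vertices have at most one common neighbour. Hence `u` has at most two
neighbours adjacent to `s₁` or `s₂`, and since the connector sets are pairwise disjoint, each of
them lies in at most one connector set.
-/

open Finset
open scoped Classical

theorem Finset.card_le_card_of_pairwiseDisjoint_meets {ι α : Type*} {s : Finset ι}
    {t : Finset α} {C : ι → Finset α} (hC : (s : Set ι).PairwiseDisjoint C)
    (hmeet : ∀ i ∈ s, ∃ c ∈ C i, c ∈ t) : #s ≤ #t := by
  refine card_le_card_of_forall_subsingleton (fun i c => c ∈ C i) ?_ ?_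
  · exact fun i hi => (hmeet i hi).imp fun c hc => ⟨hc.2, hc.1⟩
  · rintro c - i ⟨hi, hci⟩ j ⟨hj, hcj⟩
    by_contra hij
    exact disjoint_left.1 (hC hi hj hij) hci hcj

namespace C4Free

variable {V : Type*} {G : SimpleGraph V}

theorem card_neighborFinset_inter_le_one [Fintype V] [DecidableEq V] [DecidableRel G.Adj]
    (hG : C4Free G) {u s : V} (hne : u ≠ s) :
    #(G.neighborFinset u ∩ G.neighborFinset s) ≤ 1 := by
  refine card_le_one.2 fun a ha b hb => ?_
  simp only [mem_inter, SimpleGraph.mem_neighborFinset] at ha hb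
  exact (hG u a s b ha.1 ha.2.symm hb.2 hb.1.symm).resolve_left hne

theorem card_neighborFinset_inter_union_le_two [Fintype V] [DecidableEq V] [DecidableRel G.Adj]
    (hG : C4Free G) {u s₁ s₂ : V} (h₁ : u ≠ s₁) (h₂ : u ≠ s₂) :
    #(G.neighborFinset u ∩ (G.neighborFinset s₁ ∪ G.neighborFinset s₂)) ≤ 2 := by
  rw [inter_union_distrib_left]
  exact (card_union_le _ _).trans <| add_le_add
    (hG.card_neighborFinset_inter_le_one h₁) (hG.card_neighborFinset_inter_le_one h₂)

end C4Free

theorem adj_or_adj_of_mem_connector {V : Type*} [Fintype V] [DecidableEq V]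
    {G : SimpleGraph V} {s1 s2 w c : V} (hc : c ∈ connector G s1 s2 w) :
    G.Adj s1 c ∨ G.Adj s2 c := by
  simp only [connector, mem_inter, mem_sdiff, mem_union, SimpleGraph.mem_neighborFinset] at hc
  exact hc.2.1

theorem core_meets_few_connectors_general {V : Type*} [Fintype V] [DecidableEq V]
    (G : SimpleGraph V) [DecidableRel G.Adj] (hG : C4Free G)
    (s1 s2 : V)
    (k : ℕ) (v : Fin k → V)
    (hCdisj : ∀ i j : Fin k, i ≠ j →
      Disjoint (connector G s1 s2 (v i)) (connector G s1 s2 (v j)))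
    (u : V) (hu1 : u ≠ s1) (hu2 : u ≠ s2) :
    (Finset.univ.filter
      (fun i : Fin k => ∃ c ∈ connector G s1 s2 (v i), G.Adj u c)).card ≤ 2 := by
  have hmeet :
      ∀ i ∈ univ.filter (fun i : Fin k => ∃ c ∈ connector G s1 s2 (v i), G.Adj u c),
        ∃ c ∈ connector G s1 s2 (v i),
          c ∈ G.neighborFinset u ∩ (G.neighborFinset s1 ∪ G.neighborFinset s2) := by
    simp only [mem_filter, mem_univ, true_and]
    rintro i ⟨c, hc, huc⟩
    refine ⟨c, hc, ?_⟩
    simpa [mem_inter, mem_union, SimpleGraph.mem_neighborFinset, huc] using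
      adj_or_adj_of_mem_connector hc
  exact (card_le_card_of_pairwiseDisjoint_meets (fun i _ j _ hij => hCdisj i j hij) hmeet).trans
    (hG.card_neighborFinset_inter_union_le_two hu1 hu2)

/-- In a `C₄`-free bipartite graph with parts `A`, `B`, for a 2-set
`S = {s₁, s₂} ⊆ A` and vertices `v₁, …, v_k ∈ N₂(S)` with pairwise disjoint
connector sets each of size 2, any vertex `u ∈ A \ S` is adjacent to vertices
of at most 2 of the connector sets. -/
theorem core_meets_few_connectors {V : Type*} [Fintype V] [DecidableEq V]
    (G : SimpleGraph V) [DecidableRel G.Adj] (hG : C4Free G)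
    (A B : Finset V) (hdisj : Disjoint A B) (hpart : ∀ x : V, x ∈ A ∨ x ∈ B)
    (hbip : ∀ x y : V, G.Adj x y → (x ∈ A ∧ y ∈ B) ∨ (x ∈ B ∧ y ∈ A))
    (s1 s2 : V) (hne : s1 ≠ s2) (hs1 : s1 ∈ A) (hs2 : s2 ∈ A)
    (k : ℕ) (v : Fin k → V)
    (hv2 : ∀ i : Fin k, G.dist s1 (v i) = 2 ∧ G.dist s2 (v i) = 2)
    (hC2 : ∀ i : Fin k, (connector G s1 s2 (v i)).card = 2)
    (hCdisj : ∀ i j : Fin k, i ≠ j →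
      Disjoint (connector G s1 s2 (v i)) (connector G s1 s2 (v j)))
    (u : V) (hu : u ∈ A) (hu1 : u ≠ s1) (hu2 : u ≠ s2) :
    (Finset.univ.filter
      (fun i : Fin k => ∃ c ∈ connector G s1 s2 (v i), G.Adj u c)).card ≤ 2 :=
  core_meets_few_connectors_general G hG s1 s2 k v hCdisj u hu1 hu2
end
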